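/- Suppose there exist C¹ functions A, B : ℝ⁵ → ℂ such that [L̄, T] f = A·(T f) + B·(S f) for every smooth f : ℝ⁵ → ℂ. Then for every smooth f: [L̄, S] f = L(A)·(T f) + (L(B) + A)·(S f) + B·([L, S] f). (This is the paper's boxed bracket [S, L̄] = −L(A)·T − (L(B)+A)·S − B·R, with R := [L, S], for General Class III₂.) -/

import Mathlib

noncomputable section
open Complex ComplexConjugate

/-- Points of `ℝ⁵`, with coordinates `(x, y, u₁, u₂, u₃)` and `z = x + i y`. -/
abbrev V5 := Fin 5 → ℝ

/-- Partial derivative in the `j`-th coordinate direction. -/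
def pd (j : Fin 5) (f : V5 → ℂ) : V5 → ℂ := fun p => fderiv ℝ f p (Pi.single j 1)

/-- Wirtinger derivative `f_z := (f_x − i f_y)/2`. -/
def wz (f : V5 → ℂ) : V5 → ℂ := fun p => (pd 0 f p - I * pd 1 f p) / 2

/-- Wirtinger derivative `f_z̄ := (f_x + i f_y)/2`. -/
def wzb (f : V5 → ℂ) : V5 → ℂ := fun p => (pd 0 f p + I * pd 1 f p) / 2

variable (a₁ a₂ a₃ : V5 → ℂ)

/-- The operator `L f := f_z + a₁ f_{u₁} + a₂ f_{u₂} + a₃ f_{u₃}`. -/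
def Lop (f : V5 → ℂ) : V5 → ℂ := fun p =>
  wz f p + a₁ p * pd 2 f p + a₂ p * pd 3 f p + a₃ p * pd 4 f p

/-- The operator `L̄ f := f_z̄ + ā₁ f_{u₁} + ā₂ f_{u₂} + ā₃ f_{u₃}`. -/
def Lbop (f : V5 → ℂ) : V5 → ℂ := fun p =>
  wzb f p + conj (a₁ p) * pd 2 f p + conj (a₂ p) * pd 3 f p + conj (a₃ p) * pd 4 f p

/-- The operator `T := i·[L, L̄]`. -/
def Tof (f : V5 → ℂ) : V5 → ℂ := fun p =>
  I * (Lop a₁ a₂ a₃ (Lbop a₁ a₂ a₃ f) p - Lbop a₁ a₂ a₃ (Lop a₁ a₂ a₃ f) p)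

/-- The operator `S := [L, T]`. -/
def Sof (f : V5 → ℂ) : V5 → ℂ := fun p =>
  Lop a₁ a₂ a₃ (Tof a₁ a₂ a₃ f) p - Tof a₁ a₂ a₃ (Lop a₁ a₂ a₃ f) p

/-- The operator `S̄ := [L̄, T]`. -/
def Sbof (f : V5 → ℂ) : V5 → ℂ := fun p =>
  Lbop a₁ a₂ a₃ (Tof a₁ a₂ a₃ f) p - Tof a₁ a₂ a₃ (Lbop a₁ a₂ a₃ f) p

/-! By the Jacobi identity, `[L̄, S] = [L̄, [L, T]] = [[L̄, L], T] + [L, [L̄, T]]`. The first term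
vanishes because `[L̄, L] = i T` commutes with `T`; expanding the second with
`[L̄, T] = A T + B S` and the Leibniz rule for `L` gives the formula.

The operators are additive only on differentiable functions (`fderiv` is `0` elsewhere), so the
Jacobi identity is applied to operators that are linear on the submodule of smooth functions. -/

section OperatorCommutator

variable {R M : Type*} [CommRing R] [AddCommGroup M] [Module R M]

def opComm (X Y : M → M) : M → M := fun f => X (Y f) - Y (X f)

variable (R) in
structure IsLinearOn (s : Submodule R M) (X : M → M) : Prop where
  mapsTo : ∀ f ∈ s, X f ∈ s
  map_sub : ∀ f ∈ s, ∀ g ∈ s, X (f - g) = X f - X g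
  map_smul : ∀ (c : R), ∀ f ∈ s, X (c • f) = c • X f

variable {s : Submodule R M} {X Y Z : M → M}

namespace IsLinearOn

lemma opComm (hX : IsLinearOn R s X) (hY : IsLinearOn R s Y) : IsLinearOn R s (opComm X Y) where
  mapsTo f hf := s.sub_mem (hX.mapsTo _ (hY.mapsTo f hf)) (hY.mapsTo _ (hX.mapsTo f hf))
  map_sub f hf g hg := by
    simp only [_root_.opComm, hX.map_sub f hf g hg, hY.map_sub f hf g hg,
      hX.map_sub _ (hY.mapsTo f hf) _ (hY.mapsTo g hg),
      hY.map_sub _ (hX.mapsTo f hf) _ (hX.mapsTo g hg)]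
    abel
  map_smul c f hf := by
    simp only [_root_.opComm, hX.map_smul c f hf, hY.map_smul c f hf,
      hX.map_smul c _ (hY.mapsTo f hf), hY.map_smul c _ (hX.mapsTo f hf), smul_sub]

lemma const_smul (hX : IsLinearOn R s X) (c : R) : IsLinearOn R s (c • X) where
  mapsTo f hf := s.smul_mem c (hX.mapsTo f hf)
  map_sub f hf g hg := by simp only [Pi.smul_apply, hX.map_sub f hf g hg, smul_sub]
  map_smul a f hf := by simp only [Pi.smul_apply, hX.map_smul a f hf, smul_comm c a]

lemma opComm_opComm (hX : IsLinearOn R s X) (hY : IsLinearOn R s Y) (hZ : IsLinearOn R s Z)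
    {f : M} (hf : f ∈ s) :
    _root_.opComm X (_root_.opComm Y Z) f
      = _root_.opComm (_root_.opComm X Y) Z f + _root_.opComm Y (_root_.opComm X Z) f := by
  simp only [_root_.opComm]
  rw [hX.map_sub _ (hY.mapsTo _ (hZ.mapsTo f hf)) _ (hZ.mapsTo _ (hY.mapsTo f hf)),
    hY.map_sub _ (hX.mapsTo _ (hZ.mapsTo f hf)) _ (hZ.mapsTo _ (hX.mapsTo f hf)),
    hZ.map_sub _ (hX.mapsTo _ (hY.mapsTo f hf)) _ (hY.mapsTo _ (hX.mapsTo f hf))]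
  abel

lemma opComm_smul_self (hX : IsLinearOn R s X) (c : R) {f : M} (hf : f ∈ s) :
    _root_.opComm (c • X) X f = 0 := by
  simp only [_root_.opComm, Pi.smul_apply, hX.map_smul c _ (hX.mapsTo f hf), sub_self]

end IsLinearOn

end OperatorCommutator

section ContDiffSubmodule

variable (𝕜 : Type*) [NontriviallyNormedField 𝕜] {E F : Type*} [NormedAddCommGroup E]
  [NormedSpace 𝕜 E] [NormedAddCommGroup F] [NormedSpace 𝕜 F] (R : Type*) [Semiring R]
  [Module R F] [SMulCommClass 𝕜 R F] [ContinuousConstSMul R F]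

def contDiffSubmodule (n : WithTop ℕ∞) : Submodule R (E → F) where
  carrier := {f | ContDiff 𝕜 n f}
  add_mem' := ContDiff.add
  zero_mem' := contDiff_const
  smul_mem' c _ hf := hf.const_smul c

end ContDiffSubmodule

def vectorField (c : Fin 5 → V5 → ℂ) (f : V5 → ℂ) : V5 → ℂ := fun p => ∑ j, c j p * pd j f p

section VectorField

variable {c : Fin 5 → V5 → ℂ} {f g : V5 → ℂ} {p : V5}

lemma vectorField_sub (hf : DifferentiableAt ℝ f p) (hg : DifferentiableAt ℝ g p) :
    vectorField c (f - g) p = vectorField c f p - vectorField c g p := by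
  simp [vectorField, pd, fderiv_sub hf hg, mul_sub, Finset.sum_sub_distrib]

lemma vectorField_add (hf : DifferentiableAt ℝ f p) (hg : DifferentiableAt ℝ g p) :
    vectorField c (f + g) p = vectorField c f p + vectorField c g p := by
  simp [vectorField, pd, fderiv_add hf hg, mul_add, Finset.sum_add_distrib]

lemma vectorField_const_smul (hf : DifferentiableAt ℝ f p) (a : ℂ) :
    vectorField c (a • f) p = a * vectorField c f p := by
  simp [vectorField, pd, fderiv_const_smul hf a, Finset.mul_sum, mul_left_comm]

lemma vectorField_mul (hf : DifferentiableAt ℝ f p) (hg : DifferentiableAt ℝ g p) :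
    vectorField c (f * g) p = vectorField c f p * g p + f p * vectorField c g p := by
  simp only [vectorField, pd, fderiv_mul hf hg, FunLike.coe_add, Pi.add_apply,
    FunLike.coe_smul, Pi.smul_apply, smul_eq_mul, Finset.sum_mul, Finset.mul_sum,
    ← Finset.sum_add_distrib]
  exact Finset.sum_congr rfl fun j _ => by ring

lemma contDiff_pd (hf : ContDiff ℝ (⊤ : ℕ∞) f) (j : Fin 5) : ContDiff ℝ (⊤ : ℕ∞) (pd j f) := by
  have hDf : ContDiff ℝ (⊤ : ℕ∞) (fderiv ℝ f) := hf.fderiv_right (m := (⊤ : ℕ∞)) (by simp)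
  exact (ContinuousLinearMap.apply ℝ ℂ (Pi.single j 1)).contDiff.comp hDf

lemma ContDiff.vectorField (hc : ∀ j, ContDiff ℝ (⊤ : ℕ∞) (c j)) (hf : ContDiff ℝ (⊤ : ℕ∞) f) :
    ContDiff ℝ (⊤ : ℕ∞) (vectorField c f) :=
  ContDiff.sum fun j _ => (hc j).mul (contDiff_pd hf j)

lemma isLinearOn_vectorField (hc : ∀ j, ContDiff ℝ (⊤ : ℕ∞) (c j)) :
    IsLinearOn ℂ (contDiffSubmodule ℝ ℂ (⊤ : ℕ∞)) (vectorField c) where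
  mapsTo _ hf := hf.vectorField hc
  map_sub f (hf : ContDiff ℝ (⊤ : ℕ∞) f) g (hg : ContDiff ℝ (⊤ : ℕ∞) g) := funext fun p =>
    vectorField_sub (hf.differentiable (by simp) p) (hg.differentiable (by simp) p)
  map_smul a f (hf : ContDiff ℝ (⊤ : ℕ∞) f) := funext fun p =>
    vectorField_const_smul (hf.differentiable (by simp) p) a

end VectorField

section LOperators

variable {a₁ a₂ a₃}

lemma Lop_eq_vectorField :
    Lop a₁ a₂ a₃ = vectorField ![fun _ => 2⁻¹, fun _ => -I / 2, a₁, a₂, a₃] := by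
  ext f p
  simp only [Lop, wz, vectorField, Fin.sum_univ_five, Matrix.cons_val_zero, Matrix.cons_val_one,
    Matrix.cons_val, Fin.isValue]
  ring

lemma Lbop_eq_vectorField :
    Lbop a₁ a₂ a₃ = vectorField ![fun _ => 2⁻¹, fun _ => I / 2,
      fun p => conj (a₁ p), fun p => conj (a₂ p), fun p => conj (a₃ p)] := by
  ext f p
  simp only [Lbop, wzb, vectorField, Fin.sum_univ_five, Matrix.cons_val_zero, Matrix.cons_val_one,
    Matrix.cons_val, Fin.isValue]
  ring

lemma Lop_add {f g : V5 → ℂ} {p : V5} (hf : DifferentiableAt ℝ f p)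
    (hg : DifferentiableAt ℝ g p) :
    Lop a₁ a₂ a₃ (f + g) p = Lop a₁ a₂ a₃ f p + Lop a₁ a₂ a₃ g p := by
  simp only [Lop_eq_vectorField, vectorField_add hf hg]

lemma Lop_mul {f g : V5 → ℂ} {p : V5} (hf : DifferentiableAt ℝ f p)
    (hg : DifferentiableAt ℝ g p) :
    Lop a₁ a₂ a₃ (f * g) p = Lop a₁ a₂ a₃ f p * g p + f p * Lop a₁ a₂ a₃ g p := by
  simp only [Lop_eq_vectorField, vectorField_mul hf hg]

lemma opComm_Lbop_Lop : opComm (Lbop a₁ a₂ a₃) (Lop a₁ a₂ a₃) = I • Tof a₁ a₂ a₃ := by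
  ext f p
  simp only [opComm, Tof, Pi.smul_apply, Pi.sub_apply, smul_eq_mul]
  linear_combination (Lbop a₁ a₂ a₃ (Lop a₁ a₂ a₃ f) p - Lop a₁ a₂ a₃ (Lbop a₁ a₂ a₃ f) p) * I_sq

lemma contDiff_conj {g : V5 → ℂ} (hg : ContDiff ℝ (⊤ : ℕ∞) g) :
    ContDiff ℝ (⊤ : ℕ∞) (fun p => conj (g p)) :=
  conjCLE.contDiff.comp hg

variable (ha₁ : ContDiff ℝ (⊤ : ℕ∞) a₁) (ha₂ : ContDiff ℝ (⊤ : ℕ∞) a₂)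
  (ha₃ : ContDiff ℝ (⊤ : ℕ∞) a₃)
include ha₁ ha₂ ha₃

lemma isLinearOn_Lop : IsLinearOn ℂ (contDiffSubmodule ℝ ℂ (⊤ : ℕ∞)) (Lop a₁ a₂ a₃) := by
  rw [Lop_eq_vectorField]
  refine isLinearOn_vectorField fun j => ?_
  fin_cases j <;> simp [contDiff_const, ha₁, ha₂, ha₃]

lemma isLinearOn_Lbop : IsLinearOn ℂ (contDiffSubmodule ℝ ℂ (⊤ : ℕ∞)) (Lbop a₁ a₂ a₃) := by
  rw [Lbop_eq_vectorField]
  refine isLinearOn_vectorField fun j => ?_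
  fin_cases j <;> simp [contDiff_const, contDiff_conj, ha₁, ha₂, ha₃]

lemma isLinearOn_Tof : IsLinearOn ℂ (contDiffSubmodule ℝ ℂ (⊤ : ℕ∞)) (Tof a₁ a₂ a₃) :=
  ((isLinearOn_Lop ha₁ ha₂ ha₃).opComm (isLinearOn_Lbop ha₁ ha₂ ha₃)).const_smul I

end LOperators

theorem class_III₂_bracket_Lbar_S
    (ha₁ : ContDiff ℝ (⊤ : ℕ∞) a₁) (ha₂ : ContDiff ℝ (⊤ : ℕ∞) a₂)
    (ha₃ : ContDiff ℝ (⊤ : ℕ∞) a₃) (A B : V5 → ℂ)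
    (hA : ContDiff ℝ 1 A) (hB : ContDiff ℝ 1 B)
    (hAB : ∀ f : V5 → ℂ, ContDiff ℝ (⊤ : ℕ∞) f → ∀ p,
        Lbop a₁ a₂ a₃ (Tof a₁ a₂ a₃ f) p - Tof a₁ a₂ a₃ (Lbop a₁ a₂ a₃ f) p
          = A p * Tof a₁ a₂ a₃ f p + B p * Sof a₁ a₂ a₃ f p) :
    ∀ f : V5 → ℂ, ContDiff ℝ (⊤ : ℕ∞) f → ∀ p,
      Lbop a₁ a₂ a₃ (Sof a₁ a₂ a₃ f) p - Sof a₁ a₂ a₃ (Lbop a₁ a₂ a₃ f) p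
        = Lop a₁ a₂ a₃ A p * Tof a₁ a₂ a₃ f p
          + (Lop a₁ a₂ a₃ B p + A p) * Sof a₁ a₂ a₃ f p
          + B p * (Lop a₁ a₂ a₃ (Sof a₁ a₂ a₃ f) p - Sof a₁ a₂ a₃ (Lop a₁ a₂ a₃ f) p) := by
  intro f hf p
  have hL := isLinearOn_Lop ha₁ ha₂ ha₃
  have hT := isLinearOn_Tof ha₁ ha₂ ha₃
  have jacobi : Lbop a₁ a₂ a₃ (Sof a₁ a₂ a₃ f) p - Sof a₁ a₂ a₃ (Lbop a₁ a₂ a₃ f) p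
      = Lop a₁ a₂ a₃ (Sbof a₁ a₂ a₃ f) p - Sbof a₁ a₂ a₃ (Lop a₁ a₂ a₃ f) p := by
    have h := (isLinearOn_Lbop ha₁ ha₂ ha₃).opComm_opComm hL hT hf
    rw [opComm_Lbop_Lop, hT.opComm_smul_self I hf, zero_add] at h
    exact congrFun h p
  have hSbar (g : V5 → ℂ) (hg : ContDiff ℝ (⊤ : ℕ∞) g) :
      Sbof a₁ a₂ a₃ g = A * Tof a₁ a₂ a₃ g + B * Sof a₁ a₂ a₃ g :=
    funext (hAB g hg)
  have hTf : ContDiff ℝ (⊤ : ℕ∞) (Tof a₁ a₂ a₃ f) := hT.mapsTo f hf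
  have hSf : ContDiff ℝ (⊤ : ℕ∞) (Sof a₁ a₂ a₃ f) := (hL.opComm hT).mapsTo f hf
  have hTp := hTf.differentiable (by simp) p
  have hSp := hSf.differentiable (by simp) p
  have hAp := hA.differentiable one_ne_zero p
  have hBp := hB.differentiable one_ne_zero p
  rw [jacobi, hSbar f hf, hSbar _ (hL.mapsTo f hf), Lop_add (hAp.mul hTp) (hBp.mul hSp),
    Lop_mul hAp hTp, Lop_mul hBp hSp]
  simp only [Pi.add_apply, Pi.mul_apply, Sof]
  ring

end
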